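/- Let m ≥ 1, τ ≥ 0, let x : Fin m → ℝ, and set δ_i = max_j x_j − x_i for each i. Suppose c > 0 is such that for every i, either δ_i = 0 or δ_i ≥ c. Then max_i x_i − g_x(τ) ≤ exp(−τ·c) · ∑_i δ_i. In particular, the gap between max and the softmax-weighted value decays exponentially fast in τ. -/

import Mathlib

/-!
Write `M = max_i x_i` and `S = ∑ i, exp(τ x_i)`. Then `M - g_x(τ) = (∑ i, exp(τ x_i) δ_i) / S`.
The terms with `δ_i = 0` vanish, and for the others `exp(τ x_i) ≤ exp(τ (M - c)) ≤ exp(-τ c) S`,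
because `S` contains the term `exp(τ M)` of a maximising index.
-/

/-- The softmax-weighted value `g_x(τ) = (∑ i, exp(τ·x_i)·x_i) / (∑ i, exp(τ·x_i))`. -/
noncomputable def gval {m : ℕ} (x : Fin m → ℝ) (τ : ℝ) : ℝ :=
  (∑ i, Real.exp (τ * x i) * x i) / (∑ i, Real.exp (τ * x i))

/-- The maximum coordinate of `x : Fin m → ℝ`, for `m ≥ 1`. -/
noncomputable def maxVal {m : ℕ} (hm : 1 ≤ m) (x : Fin m → ℝ) : ℝ :=
  Finset.univ.sup' ⟨⟨0, hm⟩, Finset.mem_univ _⟩ x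

open Finset

theorem sub_sum_mul_div_sum {ι K : Type*} [Field K] (s : Finset ι) (w x : ι → K) (a : K)
    (hw : ∑ i ∈ s, w i ≠ 0) :
    a - (∑ i ∈ s, w i * x i) / ∑ i ∈ s, w i = (∑ i ∈ s, w i * (a - x i)) / ∑ i ∈ s, w i := by
  rw [eq_div_iff hw, sub_mul, div_mul_cancel₀ _ hw, mul_sum, ← sum_sub_distrib]
  simp only [mul_sub, mul_comm]

theorem sum_mul_le_mul_sum_of_eq_zero_or_le {ι R : Type*} [Semiring R] [PartialOrder R]
    [IsOrderedRing R] (s : Finset ι) (w d : ι → R) (K : R) (hd : ∀ i ∈ s, 0 ≤ d i)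
    (h : ∀ i ∈ s, d i = 0 ∨ w i ≤ K) :
    ∑ i ∈ s, w i * d i ≤ K * ∑ i ∈ s, d i := by
  rw [mul_sum]
  refine sum_le_sum fun i hi => ?_
  rcases h i hi with hzero | hle
  · simp [hzero]
  · exact mul_le_mul_of_nonneg_right hle (hd i hi)

theorem le_maxVal {m : ℕ} (hm : 1 ≤ m) (x : Fin m → ℝ) (i : Fin m) : x i ≤ maxVal hm x :=
  le_sup' x (mem_univ i)

theorem exists_eq_maxVal {m : ℕ} (hm : 1 ≤ m) (x : Fin m → ℝ) : ∃ j, x j = maxVal hm x := by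
  obtain ⟨j, -, hj⟩ := exists_mem_eq_sup' ⟨⟨0, hm⟩, mem_univ _⟩ x
  exact ⟨j, hj.symm⟩

theorem exp_mul_le_exp_neg_mul_sum_of_le_maxVal_sub {m : ℕ} (hm : 1 ≤ m) {τ c : ℝ}
    (hτ : 0 ≤ τ) (x : Fin m → ℝ) {i : Fin m} (hi : c ≤ maxVal hm x - x i) :
    Real.exp (τ * x i) ≤ Real.exp (-(τ * c)) * ∑ j, Real.exp (τ * x j) := by
  obtain ⟨j, hj⟩ := exists_eq_maxVal hm x
  calc Real.exp (τ * x i) ≤ Real.exp (-(τ * c) + τ * x j) :=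
        Real.exp_le_exp.2 (by nlinarith [mul_le_mul_of_nonneg_left hi hτ])
    _ = Real.exp (-(τ * c)) * Real.exp (τ * x j) := Real.exp_add _ _
    _ ≤ Real.exp (-(τ * c)) * ∑ j, Real.exp (τ * x j) := by
        gcongr
        exact single_le_sum (f := fun j => Real.exp (τ * x j)) (fun _ _ => (Real.exp_pos _).le)
          (mem_univ j)

theorem max_sub_softmax_le_exp_neg_tau_mul_general
    {m : ℕ} (hm : 1 ≤ m) (τ : ℝ) (hτ : 0 ≤ τ) (x : Fin m → ℝ)
    (c : ℝ)
    (hgap : ∀ i, maxVal hm x - x i = 0 ∨ c ≤ maxVal hm x - x i) :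
    maxVal hm x - gval x τ ≤
      Real.exp (-(τ * c)) * ∑ i, (maxVal hm x - x i) := by
  have hS : 0 < ∑ i, Real.exp (τ * x i) :=
    sum_pos (fun i _ => Real.exp_pos _) ⟨⟨0, hm⟩, mem_univ _⟩
  rw [gval, sub_sum_mul_div_sum univ (fun i => Real.exp (τ * x i)) x _ hS.ne',
    div_le_iff₀ hS, mul_right_comm]
  exact sum_mul_le_mul_sum_of_eq_zero_or_le _ _ _ _
    (fun i _ => sub_nonneg.2 (le_maxVal hm x i))
    fun i _ => (hgap i).imp_right (exp_mul_le_exp_neg_mul_sum_of_le_maxVal_sub hm hτ x)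

/-- If every gap `δ_i = max_j x_j − x_i` is either `0` or at least `c > 0`, then
`max_i x_i − g_x(τ) ≤ exp(−τ·c) · ∑ i, δ_i`: the max–softmax gap decays
exponentially fast in `τ`. -/
theorem max_sub_softmax_le_exp_neg_tau_mul
    {m : ℕ} (hm : 1 ≤ m) (τ : ℝ) (hτ : 0 ≤ τ) (x : Fin m → ℝ)
    (c : ℝ) (hc : 0 < c)
    (hgap : ∀ i, maxVal hm x - x i = 0 ∨ c ≤ maxVal hm x - x i) :
    maxVal hm x - gval x τ ≤
      Real.exp (-(τ * c)) * ∑ i, (maxVal hm x - x i) :=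
  max_sub_softmax_le_exp_neg_tau_mul_general hm τ hτ x c hgap
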